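/- Let ω > 0 and 0 < α, let F : [0,α] → ℂ be continuous, and let w : [0,α] → ℂ be four times continuously differentiable with w''''(x) − ω⁴ w(x) = F(x) on [0,α] and w(0) = w'(0) = 0. Set C₁' = w'''(α) + iω w''(α) − ω² w'(α) − iω³ w(α) and C₂' = w''(α) − ω² w(α). Then for every x ∈ [0,α], w'(x) − ω w(x) = ( C₂' / ((1−i)ω) ) [ e^{−iω(x−α)} − e^{−ωx} e^{iωα} ] + ( C₁' / (2ω²) ) [ sin(ω(x−α)) − cos(ω(x−α)) + e^{−ωx} ( sin(ωα) + cos(ωα) ) ] + (1/ω) ∫_0^x ∫_α^τ e^{−ω(x−τ)} sin(ω(τ−s)) F(s) ds dτ. -/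

import Mathlib

/-!
`v = w'' - ω² w` solves `v'' + ω² v = F` on `[0, α]`, so it is determined by its Cauchy data
at `α`, namely `v(α) = C₂'` and `v'(α) = C₁' - iω C₂'`, plus the Duhamel term
`ω⁻¹ ∫_α^τ sin(ω(τ - s)) F(s) ds`. In turn `u = w' - ω w` solves `u' + ω u = v` with `u(0) = 0`,
so `u(x) = ∫_0^x e^{-ω(x - τ)} v(τ) dτ`, and integrating the explicit terms of `v` against this
kernel gives the formula. Both uniqueness statements reduce to `f' = c f, f(x₀) = 0 ⇒ f = 0`
(integrating factor `e^{-ct}`), the second-order one through `D² + k² = (D - ik)(D + ik)`.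
-/

open Complex Set

theorem eq_zero_of_hasDerivAt_const_mul {a b x₀ : ℝ} {c : ℂ} {f : ℝ → ℂ}
    (hf : ∀ x ∈ Icc a b, HasDerivAt f (c * f x) x) (hx₀ : x₀ ∈ Icc a b) (h₀ : f x₀ = 0) :
    ∀ x ∈ Icc a b, f x = 0 := by
  set g : ℝ → ℂ := fun x => cexp (-(c * x)) * f x
  have hg : ∀ x ∈ Icc a b, HasDerivAt g 0 x := by
    intro x hx
    have hexp : HasDerivAt (fun t : ℝ => cexp (-(c * t))) (cexp (-(c * x)) * -c) x :=
      (((hasDerivAt_id (x : ℂ)).const_mul c).neg.cexp).comp_ofReal.congr_deriv (by simp)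
    exact (hexp.mul (hf x hx)).congr_deriv (by ring)
  have hconst : ∀ x ∈ Icc a b, g x = g a :=
    constant_of_has_deriv_right_zero (fun x hx => (hg x hx).continuousAt.continuousWithinAt)
      (fun x hx => (hg x (Ico_subset_Icc_self hx)).hasDerivWithinAt)
  intro x hx
  have hgx : g x = 0 := by rw [hconst x hx, ← hconst x₀ hx₀]; simp [g, h₀]
  simpa [g, Complex.exp_ne_zero] using hgx

theorem eq_zero_of_hasDerivAt_harmonic {a b x₀ : ℝ} {k : ℂ} {y y' : ℝ → ℂ}
    (hy : ∀ x ∈ Icc a b, HasDerivAt y (y' x) x)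
    (hy' : ∀ x ∈ Icc a b, HasDerivAt y' (-(k ^ 2 * y x)) x)
    (hx₀ : x₀ ∈ Icc a b) (h₀ : y x₀ = 0) (h₀' : y' x₀ = 0) :
    ∀ x ∈ Icc a b, y x = 0 := by
  have hp : ∀ x ∈ Icc a b, y' x + I * k * y x = 0 :=
    eq_zero_of_hasDerivAt_const_mul (c := I * k)
      (fun x hx => ((hy' x hx).add ((hy x hx).const_mul (I * k))).congr_deriv
        (by linear_combination (-(k ^ 2 * y x)) * I_sq))
      hx₀ (by simp [h₀, h₀'])
  exact eq_zero_of_hasDerivAt_const_mul (c := -(I * k))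
    (fun x hx => (hy x hx).congr_deriv (by linear_combination hp x hx)) hx₀ h₀

theorem hasDerivAt_iteratedDeriv_of_contDiff {𝕜 E : Type*} [NontriviallyNormedField 𝕜]
    [NormedAddCommGroup E] [NormedSpace 𝕜 E] {n m : ℕ} {f : 𝕜 → E} (hf : ContDiff 𝕜 n f)
    (hm : m < n) (x : 𝕜) : HasDerivAt (iteratedDeriv m f) (iteratedDeriv (m + 1) f x) x := by
  rw [iteratedDeriv_succ]
  exact ((hf.differentiable_iteratedDeriv m (by exact_mod_cast hm)) x).hasDerivAt

theorem hasDerivAt_ofReal_exp_mul (c x : ℝ) :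
    HasDerivAt (fun t : ℝ => (Real.exp (c * t) : ℂ)) (c * Real.exp (c * x)) x := by
  simpa [mul_comm] using
    ((Real.hasDerivAt_exp _).comp x ((hasDerivAt_id x).const_mul c)).ofReal_comp

theorem hasDerivAt_ofReal_sin_mul (k x : ℝ) :
    HasDerivAt (fun t : ℝ => (Real.sin (k * t) : ℂ)) (k * Real.cos (k * x)) x := by
  simpa [mul_comm] using
    ((Real.hasDerivAt_sin _).comp x ((hasDerivAt_id x).const_mul k)).ofReal_comp

theorem hasDerivAt_ofReal_cos_mul (k x : ℝ) :
    HasDerivAt (fun t : ℝ => (Real.cos (k * t) : ℂ)) (-(k * Real.sin (k * x))) x := by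
  simpa [mul_comm] using
    ((Real.hasDerivAt_cos _).comp x ((hasDerivAt_id x).const_mul k)).ofReal_comp

/-- `sinConv k a F / k` is the solution of `y'' + k² y = F` with `y(a) = y'(a) = 0`. -/
noncomputable def sinConv (k a : ℝ) (F : ℝ → ℂ) (x : ℝ) : ℂ :=
  ∫ s in a..x, (Real.sin (k * (x - s)) : ℂ) * F s

noncomputable def cosConv (k a : ℝ) (F : ℝ → ℂ) (x : ℝ) : ℂ :=
  ∫ s in a..x, (Real.cos (k * (x - s)) : ℂ) * F s

section Convolution

variable {k a : ℝ} {F : ℝ → ℂ}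

theorem sinConv_eq (hF : Continuous F) (x : ℝ) :
    sinConv k a F x = Real.sin (k * x) * (∫ s in a..x, (Real.cos (k * s) : ℂ) * F s)
      - Real.cos (k * x) * ∫ s in a..x, (Real.sin (k * s) : ℂ) * F s := by
  rw [← intervalIntegral.integral_const_mul, ← intervalIntegral.integral_const_mul,
    ← intervalIntegral.integral_sub ((by fun_prop : Continuous _).intervalIntegrable _ _)
      ((by fun_prop : Continuous _).intervalIntegrable _ _)]
  refine intervalIntegral.integral_congr fun s _ => ?_
  simp only [mul_sub, Real.sin_sub]
  push_cast
  ring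

theorem cosConv_eq (hF : Continuous F) (x : ℝ) :
    cosConv k a F x = Real.cos (k * x) * (∫ s in a..x, (Real.cos (k * s) : ℂ) * F s)
      + Real.sin (k * x) * ∫ s in a..x, (Real.sin (k * s) : ℂ) * F s := by
  rw [← intervalIntegral.integral_const_mul, ← intervalIntegral.integral_const_mul,
    ← intervalIntegral.integral_add ((by fun_prop : Continuous _).intervalIntegrable _ _)
      ((by fun_prop : Continuous _).intervalIntegrable _ _)]
  refine intervalIntegral.integral_congr fun s _ => ?_
  simp only [mul_sub, Real.cos_sub]
  push_cast
  ring

theorem hasDerivAt_sinConv (hF : Continuous F) (x : ℝ) :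
    HasDerivAt (sinConv k a F) (k * cosConv k a F x) x := by
  have hA := (Continuous.integral_hasStrictDerivAt (f := fun s => (Real.cos (k * s) : ℂ) * F s)
    (by fun_prop) a x).hasDerivAt
  have hB := (Continuous.integral_hasStrictDerivAt (f := fun s => (Real.sin (k * s) : ℂ) * F s)
    (by fun_prop) a x).hasDerivAt
  rw [funext (sinConv_eq (k := k) (a := a) hF), cosConv_eq hF]
  exact (((hasDerivAt_ofReal_sin_mul k x).mul hA).sub
    ((hasDerivAt_ofReal_cos_mul k x).mul hB)).congr_deriv (by ring)

theorem hasDerivAt_cosConv (hF : Continuous F) (x : ℝ) :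
    HasDerivAt (cosConv k a F) (F x - k * sinConv k a F x) x := by
  have hA := (Continuous.integral_hasStrictDerivAt (f := fun s => (Real.cos (k * s) : ℂ) * F s)
    (by fun_prop) a x).hasDerivAt
  have hB := (Continuous.integral_hasStrictDerivAt (f := fun s => (Real.sin (k * s) : ℂ) * F s)
    (by fun_prop) a x).hasDerivAt
  have hpyth : (Real.cos (k * x) : ℂ) ^ 2 + (Real.sin (k * x) : ℂ) ^ 2 = 1 := by
    exact_mod_cast Real.cos_sq_add_sin_sq (k * x)
  rw [funext (cosConv_eq (k := k) (a := a) hF), sinConv_eq hF]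
  exact (((hasDerivAt_ofReal_cos_mul k x).mul hA).add
    ((hasDerivAt_ofReal_sin_mul k x).mul hB)).congr_deriv (by linear_combination F x * hpyth)

theorem continuous_sinConv (hF : Continuous F) : Continuous (sinConv k a F) :=
  continuous_iff_continuousAt.2 fun x => (hasDerivAt_sinConv hF x).continuousAt

end Convolution

theorem eq_cos_add_sin_add_sinConv {a b x₀ k : ℝ} (hk : k ≠ 0) {F y y' : ℝ → ℂ}
    (hF : Continuous F) (hy : ∀ x ∈ Icc a b, HasDerivAt y (y' x) x)
    (hy' : ∀ x ∈ Icc a b, HasDerivAt y' (F x - k ^ 2 * y x) x) (hx₀ : x₀ ∈ Icc a b) :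
    ∀ x ∈ Icc a b, y x = y x₀ * Real.cos (k * (x - x₀)) + y' x₀ / k * Real.sin (k * (x - x₀))
      + sinConv k x₀ F x / k := by
  have hk' : (k : ℂ) ≠ 0 := by exact_mod_cast hk
  set z : ℝ → ℂ := fun x => y x₀ * Real.cos (k * (x - x₀)) + y' x₀ / k * Real.sin (k * (x - x₀))
      + sinConv k x₀ F x / k
  set z' : ℝ → ℂ := fun x => -(k * y x₀ * Real.sin (k * (x - x₀)))
      + y' x₀ * Real.cos (k * (x - x₀)) + cosConv k x₀ F x
  have hcos (x : ℝ) := (hasDerivAt_ofReal_cos_mul k (x - x₀)).comp_sub_const x x₀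
  have hsin (x : ℝ) := (hasDerivAt_ofReal_sin_mul k (x - x₀)).comp_sub_const x x₀
  have hz (x : ℝ) : HasDerivAt z (z' x) x :=
    ((((hcos x).const_mul (y x₀)).add ((hsin x).const_mul (y' x₀ / k))).add
      ((hasDerivAt_sinConv hF x).div_const (k : ℂ))).congr_deriv (by field_simp; ring)
  have hz' (x : ℝ) : HasDerivAt z' (F x - k ^ 2 * z x) x :=
    (((((hsin x).const_mul (k * y x₀)).neg).add ((hcos x).const_mul (y' x₀))).add
      (hasDerivAt_cosConv hF x)).congr_deriv (by simp only [z]; field_simp; ring)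
  have hdiff := eq_zero_of_hasDerivAt_harmonic (k := k) (y := fun x => y x - z x)
    (fun x hx => (hy x hx).sub (hz x)) (fun x hx => ((hy' x hx).sub (hz' x)).congr_deriv
      (by ring)) hx₀ (by simp [z, sinConv]) (by simp [z', cosConv])
  exact fun x hx => sub_eq_zero.mp (hdiff x hx)

theorem eq_exp_mul_add_integral {a b c : ℝ} {u g : ℝ → ℂ} (hg : Continuous g)
    (hu : ∀ x ∈ Icc a b, HasDerivAt u (g x - c * u x) x) :
    ∀ x ∈ Icc a b, u x = Real.exp (-(c * (x - a))) * u a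
      + ∫ τ in a..x, (Real.exp (-(c * (x - τ))) : ℂ) * g τ := by
  set P : ℝ → ℂ := fun x => ∫ τ in a..x, (Real.exp (c * τ) : ℂ) * g τ
  set z : ℝ → ℂ := fun x => Real.exp (-c * x) * (Real.exp (c * a) * u a + P x)
  have hexp (x : ℝ) : (Real.exp (-c * x) : ℂ) * Real.exp (c * x) = 1 := by
    rw [← ofReal_mul, ← Real.exp_add]; simp
  have hz (x : ℝ) : HasDerivAt z (g x - c * z x) x :=
    ((hasDerivAt_ofReal_exp_mul (-c) x).mul
      ((Continuous.integral_hasStrictDerivAt (by fun_prop) a x).hasDerivAt.const_add _)).congr_deriv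
      (by simp only [z, ofReal_neg]; linear_combination g x * hexp x)
  intro x hx
  have hdiff := eq_zero_of_hasDerivAt_const_mul (c := -c) (f := fun x => u x - z x)
    (fun x hx => ((hu x hx).sub (hz x)).congr_deriv (by ring))
    (left_mem_Icc.mpr (hx.1.trans hx.2))
    (by simp only [z, P, intervalIntegral.integral_same]; linear_combination -u a * hexp a)
  rw [sub_eq_zero.mp (hdiff x hx)]
  simp only [z, P, mul_add, ← intervalIntegral.integral_const_mul, ← mul_assoc, ← ofReal_mul,
    ← Real.exp_add]
  ring_nf

theorem hasDerivAt_exp_neg_mul_sub (ω x τ : ℝ) :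
    HasDerivAt (fun t => Real.exp (-(ω * (x - t)))) (ω * Real.exp (-(ω * (x - τ)))) τ :=
  (((hasDerivAt_id τ).const_sub x).const_mul ω).neg.exp.congr_deriv (by simp; ring)

theorem hasDerivAt_sin_mul_sub (ω a τ : ℝ) :
    HasDerivAt (fun t => Real.sin (ω * (t - a))) (ω * Real.cos (ω * (τ - a))) τ := by
  simpa [mul_comm] using (((hasDerivAt_id τ).sub_const a).const_mul ω).sin

theorem hasDerivAt_cos_mul_sub (ω a τ : ℝ) :
    HasDerivAt (fun t => Real.cos (ω * (t - a))) (-(ω * Real.sin (ω * (τ - a)))) τ := by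
  simpa [mul_comm] using (((hasDerivAt_id τ).sub_const a).const_mul ω).cos

theorem integral_exp_mul_sin (ω a x : ℝ) (hω : ω ≠ 0) :
    ∫ τ in (0 : ℝ)..x, Real.exp (-(ω * (x - τ))) * Real.sin (ω * (τ - a))
      = (Real.sin (ω * (x - a)) - Real.cos (ω * (x - a))
        + Real.exp (-(ω * x)) * (Real.sin (ω * a) + Real.cos (ω * a))) / (2 * ω) := by
  rw [intervalIntegral.integral_eq_sub_of_hasDerivAt (f := fun τ =>
      Real.exp (-(ω * (x - τ))) * (Real.sin (ω * (τ - a)) - Real.cos (ω * (τ - a))) / (2 * ω))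
    (fun τ _ => (((hasDerivAt_exp_neg_mul_sub ω x τ).mul ((hasDerivAt_sin_mul_sub ω a τ).sub
      (hasDerivAt_cos_mul_sub ω a τ))).div_const _).congr_deriv
      (by simp only [Pi.sub_apply]; field_simp; ring))
    ((by fun_prop : Continuous _).intervalIntegrable _ _)]
  simp only [sub_zero, sub_self, mul_zero, neg_zero, Real.exp_zero, zero_sub, mul_neg, Real.sin_neg,
    Real.cos_neg]
  field_simp
  ring

theorem integral_exp_mul_cos (ω a x : ℝ) (hω : ω ≠ 0) :
    ∫ τ in (0 : ℝ)..x, Real.exp (-(ω * (x - τ))) * Real.cos (ω * (τ - a))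
      = (Real.sin (ω * (x - a)) + Real.cos (ω * (x - a))
        + Real.exp (-(ω * x)) * (Real.sin (ω * a) - Real.cos (ω * a))) / (2 * ω) := by
  rw [intervalIntegral.integral_eq_sub_of_hasDerivAt (f := fun τ =>
      Real.exp (-(ω * (x - τ))) * (Real.sin (ω * (τ - a)) + Real.cos (ω * (τ - a))) / (2 * ω))
    (fun τ _ => (((hasDerivAt_exp_neg_mul_sub ω x τ).mul ((hasDerivAt_sin_mul_sub ω a τ).add
      (hasDerivAt_cos_mul_sub ω a τ))).div_const _).congr_deriv
      (by simp only [Pi.add_apply]; field_simp; ring))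
    ((by fun_prop : Continuous _).intervalIntegrable _ _)]
  simp only [sub_zero, sub_self, mul_zero, neg_zero, Real.exp_zero, zero_sub, mul_neg, Real.sin_neg,
    Real.cos_neg]
  field_simp
  ring

theorem exp_I_mul_ofReal (ω t : ℝ) :
    cexp (I * ω * t) = Real.cos (ω * t) + Real.sin (ω * t) * I := by
  rw [← exp_ofReal_mul_I]; push_cast; ring_nf

theorem exp_neg_I_mul_ofReal (ω t : ℝ) :
    cexp (-(I * ω * t)) = Real.cos (ω * t) - Real.sin (ω * t) * I := by
  rw [show -(I * ω * (t : ℂ)) = I * ω * ((-t : ℝ) : ℂ) by push_cast; ring, exp_I_mul_ofReal,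
    mul_neg, Real.cos_neg, Real.sin_neg, ofReal_neg, neg_mul, sub_eq_add_neg]

theorem integral_exp_mul_cos_add_sin_add_sinConv {ω : ℝ} (hω : ω ≠ 0) {F : ℝ → ℂ}
    (hF : Continuous F) (α x : ℝ) (A B : ℂ) :
    ∫ τ in (0 : ℝ)..x, (Real.exp (-(ω * (x - τ))) : ℂ)
        * (A * Real.cos (ω * (τ - α)) + B * Real.sin (ω * (τ - α)) + sinConv ω α F τ / ω)
      = A * (Real.sin (ω * (x - α)) + Real.cos (ω * (x - α))
            + Real.exp (-(ω * x)) * (Real.sin (ω * α) - Real.cos (ω * α))) / (2 * ω)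
        + B * (Real.sin (ω * (x - α)) - Real.cos (ω * (x - α))
            + Real.exp (-(ω * x)) * (Real.sin (ω * α) + Real.cos (ω * α))) / (2 * ω)
        + 1 / ω * ∫ τ in (0 : ℝ)..x, ∫ s in α..τ,
            (Real.exp (-(ω * (x - τ))) : ℂ) * Real.sin (ω * (τ - s)) * F s := by
  have hcos := congrArg ((↑) : ℝ → ℂ) (integral_exp_mul_cos ω α x hω)
  have hsin := congrArg ((↑) : ℝ → ℂ) (integral_exp_mul_sin ω α x hω)
  simp only [← intervalIntegral.integral_ofReal, ofReal_mul, ofReal_div, ofReal_add, ofReal_sub,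
    ofReal_ofNat] at hcos hsin
  have hduhamel : Continuous (sinConv ω α F) := continuous_sinConv hF
  have hint (f : ℝ → ℂ) (hf : Continuous f) : IntervalIntegrable f MeasureTheory.volume 0 x :=
    hf.intervalIntegrable _ _
  simp only [mul_add]
  rw [intervalIntegral.integral_add (hint _ (by fun_prop)) (hint _ (by fun_prop)),
    intervalIntegral.integral_add (hint _ (by fun_prop)) (hint _ (by fun_prop))]
  congr 1
  congr 1
  · simp only [mul_left_comm _ A, intervalIntegral.integral_const_mul, hcos]
    ring
  · simp only [mul_left_comm _ B, intervalIntegral.integral_const_mul, hsin]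
    ring
  · rw [← intervalIntegral.integral_const_mul]
    refine intervalIntegral.integral_congr fun τ _ => ?_
    simp only [sinConv, mul_assoc, intervalIntegral.integral_const_mul]
    ring

theorem integral_exp_mul_cos_add_sin_add_sinConv_eq_cexp {ω : ℝ} (hω : ω ≠ 0) {F : ℝ → ℂ}
    (hF : Continuous F) (α x : ℝ) (A B : ℂ) :
    ∫ τ in (0 : ℝ)..x, (Real.exp (-(ω * (x - τ))) : ℂ)
        * (A * Real.cos (ω * (τ - α)) + B * Real.sin (ω * (τ - α)) + sinConv ω α F τ / ω)
      = A / ((1 - I) * ω)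
          * (cexp (-(I * ω * ((x - α : ℝ) : ℂ))) - Real.exp (-(ω * x)) * cexp (I * ω * (α : ℂ)))
        + (B + I * A) / (2 * ω) * (Real.sin (ω * (x - α)) - Real.cos (ω * (x - α))
            + Real.exp (-(ω * x)) * (Real.sin (ω * α) + Real.cos (ω * α)))
        + 1 / ω * ∫ τ in (0 : ℝ)..x, ∫ s in α..τ,
            (Real.exp (-(ω * (x - τ))) : ℂ) * Real.sin (ω * (τ - s)) * F s := by
  have h1I : (1 - I : ℂ) ≠ 0 := by
    intro h; simpa using congrArg Complex.im h
  have hω' : (ω : ℂ) ≠ 0 := by exact_mod_cast hω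
  rw [integral_exp_mul_cos_add_sin_add_sinConv hω hF, exp_neg_I_mul_ofReal, exp_I_mul_ofReal]
  field_simp
  ring_nf
  simp only [I_sq]
  ring

theorem representation_first_order_left_general
    (ω α : ℝ) (hω : 0 < ω)
    (F : ℝ → ℂ) (hF : Continuous F)
    (w : ℝ → ℂ) (hw : ContDiff ℝ 4 w)
    (hode : ∀ x ∈ Set.Icc 0 α, iteratedDeriv 4 w x - ((ω^4 : ℝ) : ℂ) * w x = F x)
    (hw0 : w 0 = 0) (hw0' : deriv w 0 = 0)
    (C₁' C₂' : ℂ)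
    (hC₁' : C₁' = iteratedDeriv 3 w α + I * ω * iteratedDeriv 2 w α
        - (ω^2 : ℝ) * deriv w α - I * (ω^3 : ℝ) * w α)
    (hC₂' : C₂' = iteratedDeriv 2 w α - (ω^2 : ℝ) * w α) :
    ∀ x ∈ Set.Icc (0:ℝ) α,
      deriv w x - (ω : ℂ) * w x
        = (C₂' / ((1 - I) * ω))
            * (Complex.exp (-(I * ω * ((x - α : ℝ) : ℂ)))
                - ((Real.exp (-(ω * x)) : ℝ) : ℂ) * Complex.exp (I * ω * (α : ℂ)))
          + (C₁' / (2 * (ω^2 : ℝ)))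
            * (((Real.sin (ω * (x - α)) : ℝ) : ℂ) - ((Real.cos (ω * (x - α)) : ℝ) : ℂ)
                + ((Real.exp (-(ω * x)) : ℝ) : ℂ)
                  * (((Real.sin (ω * α) : ℝ) : ℂ) + ((Real.cos (ω * α) : ℝ) : ℂ)))
          + (1 / (ω : ℂ)) * ∫ τ in (0:ℝ)..x, ∫ s in α..τ,
              ((Real.exp (-(ω * (x - τ))) : ℝ) : ℂ)
                * ((Real.sin (ω * (τ - s)) : ℝ) : ℂ) * F s := by
  intro x hx
  have hw1 (t : ℝ) : HasDerivAt w (deriv w t) t := by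
    simpa using hasDerivAt_iteratedDeriv_of_contDiff hw (m := 0) (by norm_num) t
  have hw2 (t : ℝ) : HasDerivAt (deriv w) (iteratedDeriv 2 w t) t := by
    simpa using hasDerivAt_iteratedDeriv_of_contDiff hw (m := 1) (by norm_num) t
  set v : ℝ → ℂ := fun t => iteratedDeriv 2 w t - (ω : ℂ) ^ 2 * w t
  have hv_rep := eq_cos_add_sin_add_sinConv hω.ne' hF (y := v)
    (y' := fun t => iteratedDeriv 3 w t - (ω : ℂ) ^ 2 * deriv w t)
    (fun t _ => (hasDerivAt_iteratedDeriv_of_contDiff hw (by norm_num) t).sub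
      ((hw1 t).const_mul _))
    (fun t ht => ((hasDerivAt_iteratedDeriv_of_contDiff hw (by norm_num) t).sub
      ((hw2 t).const_mul _)).congr_deriv (by rw [← hode t ht]; push_cast; ring))
    (right_mem_Icc.mpr (hx.1.trans hx.2))
  have hu_rep := eq_exp_mul_add_integral (c := ω) (u := fun t => deriv w t - ω * w t) (g := v)
    ((hw.continuous_iteratedDeriv 2 (by norm_num)).sub (continuous_const.mul hw.continuous))
    (fun t _ => ((hw2 t).sub ((hw1 t).const_mul _)).congr_deriv (by ring)) x hx
  have hvα : v α = C₂' := by rw [hC₂']; push_cast; ring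
  have hv'α : iteratedDeriv 3 w α - (ω : ℂ) ^ 2 * deriv w α = C₁' - I * ω * C₂' := by
    rw [hC₁', hC₂']; push_cast; ring
  have hsub : uIcc 0 x ⊆ Icc 0 α := by
    rw [uIcc_of_le hx.1]; exact Icc_subset_Icc le_rfl hx.2
  rw [hu_rep, hw0, hw0', intervalIntegral.integral_congr fun τ hτ =>
      congrArg (_ * ·) (hv_rep τ (hsub hτ)), integral_exp_mul_cos_add_sin_add_sinConv_eq_cexp hω.ne' hF, hvα, hv'α]
  have hC₁ : ((C₁' - I * ω * C₂') / ω + I * C₂') / (2 * ω) = C₁' / (2 * (ω ^ 2 : ℝ)) := by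
    have hω' : (ω : ℂ) ≠ 0 := by exact_mod_cast hω.ne'
    push_cast; field_simp; ring
  simp [hC₁]

/-- First-order representation of `w'''' − ω⁴ w = F` on `[0,α]` with clamped data
`w(0) = w'(0) = 0`: for all `x ∈ [0,α]`,
`w'(x) − ω w(x) = (C₂'/((1−i)ω))[e^{−iω(x−α)} − e^{−ωx}e^{iωα}]
  + (C₁'/(2ω²))[sin(ω(x−α)) − cos(ω(x−α)) + e^{−ωx}(sin(ωα) + cos(ωα))]
  + (1/ω)∫₀^x ∫_α^τ e^{−ω(x−τ)} sin(ω(τ−s)) F(s) ds dτ`. -/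
theorem representation_first_order_left
    (ω α : ℝ) (hω : 0 < ω) (hα : 0 < α)
    (F : ℝ → ℂ) (hF : Continuous F)
    (w : ℝ → ℂ) (hw : ContDiff ℝ 4 w)
    (hode : ∀ x ∈ Set.Icc 0 α, iteratedDeriv 4 w x - ((ω^4 : ℝ) : ℂ) * w x = F x)
    (hw0 : w 0 = 0) (hw0' : deriv w 0 = 0)
    (C₁' C₂' : ℂ)
    (hC₁' : C₁' = iteratedDeriv 3 w α + I * ω * iteratedDeriv 2 w α
        - (ω^2 : ℝ) * deriv w α - I * (ω^3 : ℝ) * w α)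
    (hC₂' : C₂' = iteratedDeriv 2 w α - (ω^2 : ℝ) * w α) :
    ∀ x ∈ Set.Icc (0:ℝ) α,
      deriv w x - (ω : ℂ) * w x
        = (C₂' / ((1 - I) * ω))
            * (Complex.exp (-(I * ω * ((x - α : ℝ) : ℂ)))
                - ((Real.exp (-(ω * x)) : ℝ) : ℂ) * Complex.exp (I * ω * (α : ℂ)))
          + (C₁' / (2 * (ω^2 : ℝ)))
            * (((Real.sin (ω * (x - α)) : ℝ) : ℂ) - ((Real.cos (ω * (x - α)) : ℝ) : ℂ)
                + ((Real.exp (-(ω * x)) : ℝ) : ℂ)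
                  * (((Real.sin (ω * α) : ℝ) : ℂ) + ((Real.cos (ω * α) : ℝ) : ℂ)))
          + (1 / (ω : ℂ)) * ∫ τ in (0:ℝ)..x, ∫ s in α..τ,
              ((Real.exp (-(ω * (x - τ))) : ℝ) : ℂ)
                * ((Real.sin (ω * (τ - s)) : ℝ) : ℂ) * F s :=
  representation_first_order_left_general ω α hω F hF w hw hode hw0 hw0' C₁' C₂' hC₁' hC₂'
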